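/- Let q = 3^h with h odd, and let 𝔽_q be the field with q elements (of characteristic 3). For (x,y) ∈ 𝔽_q², let ℓ_{x,y} be the 2-dimensional subspace of 𝔽_q^4 spanned by (1, 0, −(x+y), x) and (0, 1, x+2y, y), and let ℓ_∞ be the 2-dimensional subspace spanned by (0,0,1,0) and (0,0,0,1). Then 𝒮 = { ℓ_{x,y} : (x,y) ∈ 𝔽_q² } ∪ { ℓ_∞ } is a line spread of PG(3,q), i.e. these q²+1 two-dimensional subspaces pairwise intersect trivially and cover 𝔽_q^4; moreover no member of 𝒮 contains exactly one point of the elliptic quadric defined by F(X₀,X₁,X₂,X₃) = X₀X₁ + X₂² + X₃², so that exactly (q²+1)/2 members of 𝒮 contain exactly two points of this quadric. -/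

import Mathlib

open Module Set

/-- The points of the quadric of `Q`: projective points spanned by singular vectors. -/
def QuadricPoints {F V : Type} [Field F] [AddCommGroup V] [Module F V]
    (Q : V → F) : Set (Submodule F V) :=
  {p | ∃ v : V, v ≠ 0 ∧ Q v = 0 ∧ p = Submodule.span F {v}}

/-- The quadratic form `X₀X₁ + X₂² + X₃²` of the elliptic quadric `Q⁻(3,q)`,
for `q = 3^h` with `h` odd. -/
def ellQuadric (F : Type) [Field F] : (Fin 4 → F) → F :=
  fun v => v 0 * v 1 + v 2 ^ 2 + v 3 ^ 2

/-- The line `ℓ_{x,y}`, spanned by `(1, 0, -(x+y), x)` and `(0, 1, x+2y, y)`. -/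
def lineXY (F : Type) [Field F] (x y : F) : Submodule F (Fin 4 → F) :=
  Submodule.span F {![1, 0, -(x + y), x], ![0, 1, x + 2 * y, y]}

/-- The line `ℓ_∞`, spanned by `(0,0,1,0)` and `(0,0,0,1)`. -/
def lineInf (F : Type) [Field F] : Submodule F (Fin 4 → F) :=
  Submodule.span F {![0, 0, 1, 0], ![0, 0, 0, 1]}

/-- The set of lines `𝒮 = { ℓ_{x,y} : x,y ∈ F } ∪ { ℓ_∞ }`. -/
def spreadS (F : Type) [Field F] : Set (Submodule F (Fin 4 → F)) :=
  {l | ∃ x y : F, l = lineXY F x y} ∪ {lineInf F}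

/-!
For fixed `v`, the condition `v ∈ ℓ_{x,y}` is a linear system in `(x, y)` with determinant
`v₀² + v₁² - 3 v₀ v₁`, which in characteristic 3 is the norm form `v₀² + v₁²`; it vanishes only
at `v₀ = v₁ = 0` because `-1` is a nonsquare when `q ≡ 3 (mod 4)`. Uniqueness of solutions gives
trivial intersections and existence gives the covering.

On `ℓ_{x,y}` the quadratic form becomes a binary form `A a² + B ab + C b²` with `A + C = 0`, so
its discriminant is `B² + A² ≠ 0`. A binary form with nonzero discriminant is either anisotropic
or a product of two independent linear forms, so every line of the spread meets the quadric in
0 or 2 points. Since the spread partitions the `q² + 1` points of the quadric, exactly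
`(q² + 1) / 2` of its lines are secants.
-/

section FiniteFieldArithmetic

variable {F : Type*} [Field F]

theorem sq_add_sq_eq_zero_iff_of_not_isSquare_neg_one (hF : ¬ IsSquare (-1 : F)) {a b : F} :
    a ^ 2 + b ^ 2 = 0 ↔ a = 0 ∧ b = 0 := by
  refine ⟨fun h => ?_, fun ⟨ha, hb⟩ => by simp [ha, hb]⟩
  by_cases hb : b = 0
  · exact ⟨by simpa [hb] using h, hb⟩
  · exact absurd ⟨a / b, by field_simp; linear_combination -h⟩ hF

theorem three_eq_zero_of_card_eq_three_pow [Fintype F] {h : ℕ} (hh : h ≠ 0)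
    (hcard : Fintype.card F = 3 ^ h) : (3 : F) = 0 := by
  have := FiniteField.cast_card_eq_zero F
  rw [hcard, Nat.cast_pow, Nat.cast_ofNat] at this
  exact pow_eq_zero_iff hh |>.mp this

theorem not_isSquare_neg_one_of_card_eq_three_pow [Fintype F] {h : ℕ} (hodd : Odd h)
    (hcard : Fintype.card F = 3 ^ h) : ¬ IsSquare (-1 : F) := by
  obtain ⟨k, rfl⟩ := hodd
  rw [FiniteField.isSquare_neg_one_iff, hcard, pow_succ, pow_mul, Nat.mul_mod, Nat.pow_mod]
  norm_num

end FiniteFieldArithmetic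

section BinaryForm

variable {F V : Type} [Field F] [AddCommGroup V] [Module F V] {Q : V → F} {u w : V}

theorem exists_factorization_of_discrim_eq_mul_self (h2 : (2 : F) ≠ 0) {A B C e : F}
    (he : discrim A B C = e * e) (he0 : e ≠ 0) :
    ∃ α β γ δ : F, α * δ - β * γ ≠ 0 ∧
      ∀ a b : F, A * a ^ 2 + B * a * b + C * b ^ 2 = (α * a + β * b) * (γ * a + δ * b) := by
  rw [discrim] at he
  by_cases hA : A = 0
  · have hB : B ≠ 0 := by
      rintro rfl
      exact he0 (mul_self_eq_zero.mp (by simpa [hA] using he.symm))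
    exact ⟨0, 1, B, C, by simpa using hB, fun a b => by rw [hA]; ring⟩
  · refine ⟨1, (B - e) / (2 * A), A, (B + e) / 2, ?_, fun a b => ?_⟩
    · have hdet : 1 * ((B + e) / 2) - (B - e) / (2 * A) * A = e := by field_simp; ring
      rwa [hdet]
    · field_simp
      linear_combination (-b ^ 2) * he

theorem span_singleton_eq_of_smul_eq_smul {c d : F} {v x : V} (hc : c ≠ 0) (hv : v ≠ 0)
    (h : c • v = d • x) : Submodule.span F {v} = Submodule.span F {x} := by
  have hd : d ≠ 0 := by
    rintro rfl
    exact hv (smul_eq_zero.mp (h.trans (zero_smul F x)) |>.resolve_left hc)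
  rw [← Submodule.span_singleton_smul_eq (IsUnit.mk0 c hc), h,
    Submodule.span_singleton_smul_eq (IsUnit.mk0 d hd)]

theorem quadricPoints_inf_span_pair_eq_pair (hind : LinearIndependent F ![u, w])
    {α β γ δ : F} (hdet : α * δ - β * γ ≠ 0)
    (hQ : ∀ a b : F, Q (a • u + b • w) = (α * a + β * b) * (γ * a + δ * b)) :
    QuadricPoints Q ∩ {p | p ≤ Submodule.span F {u, w}} =
      {Submodule.span F {β • u - α • w}, Submodule.span F {δ • u - γ • w}} := by
  have hpoint : ∀ a b : F, (a ≠ 0 ∨ b ≠ 0) → Q (a • u + (-b) • w) = 0 →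
      Submodule.span F {a • u - b • w} ∈ QuadricPoints Q ∩ {p | p ≤ Submodule.span F {u, w}} := by
    intro a b hab hQab
    rw [neg_smul, ← sub_eq_add_neg] at hQab
    refine ⟨⟨a • u - b • w, fun h => ?_, hQab, rfl⟩, ?_⟩
    · rw [sub_eq_add_neg, ← neg_smul] at h
      obtain ⟨ha, hb⟩ := LinearIndependent.pair_iff.mp hind _ _ h
      rcases hab with hab | hab <;> simp_all
    · refine (Submodule.span_singleton_le_iff_mem _ _).mpr (sub_mem ?_ ?_) <;>
        exact Submodule.smul_mem _ _ (Submodule.subset_span (by simp))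
  ext p
  constructor
  · rintro ⟨⟨v, hv0, hQv, rfl⟩, hle⟩
    obtain ⟨a, b, rfl⟩ :=
      Submodule.mem_span_pair.mp ((Submodule.span_singleton_le_iff_mem _ _).mp hle)
    have hcramer : (α * δ - β * γ) • (a • u + b • w) =
        (α * a + β * b) • (δ • u - γ • w) - (γ * a + δ * b) • (β • u - α • w) := by
      module
    rw [hQ] at hQv
    rcases mul_eq_zero.mp hQv with h | h
    · left
      exact span_singleton_eq_of_smul_eq_smul hdet hv0
        (by rw [hcramer, h, zero_smul, zero_sub, ← neg_smul])
    · right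
      exact span_singleton_eq_of_smul_eq_smul hdet hv0
        (by rw [hcramer, h, zero_smul, sub_zero])
  · rintro (rfl | rfl)
    · refine hpoint β α ?_ (by rw [hQ]; ring)
      contrapose! hdet
      simp [hdet]
    · refine hpoint δ γ ?_ (by rw [hQ]; ring)
      contrapose! hdet
      simp [hdet]

theorem quadricPoints_inf_span_pair_eq_empty {A B C : F}
    (hQ : ∀ a b : F, Q (a • u + b • w) = A * a ^ 2 + B * a * b + C * b ^ 2)
    (hD : ¬ IsSquare (discrim A B C)) :
    QuadricPoints Q ∩ {p | p ≤ Submodule.span F {u, w}} = ∅ := by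
  refine Set.eq_empty_iff_forall_notMem.mpr ?_
  rintro p ⟨⟨v, hv0, hQv, rfl⟩, hle⟩
  obtain ⟨a, b, rfl⟩ :=
    Submodule.mem_span_pair.mp ((Submodule.span_singleton_le_iff_mem _ _).mp hle)
  rw [hQ] at hQv
  have key : discrim A B C * b ^ 2 = (2 * A * a + B * b) ^ 2 := by
    rw [discrim]; linear_combination (-4 * A) * hQv
  by_cases hb : b = 0
  · have hA : A ≠ 0 := by
      rintro rfl
      exact hD ⟨B, by simp [discrim, sq]⟩
    have ha : a = 0 := by simpa [hb, hA] using hQv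
    simp [ha, hb] at hv0
  · exact hD ⟨(2 * A * a + B * b) / b, by field_simp; linear_combination key⟩

theorem ncard_quadricPoints_inf_span_pair_eq_two (hind : LinearIndependent F ![u, w])
    {α β γ δ : F} (hdet : α * δ - β * γ ≠ 0)
    (hQ : ∀ a b : F, Q (a • u + b • w) = (α * a + β * b) * (γ * a + δ * b)) :
    (QuadricPoints Q ∩ {p | p ≤ Submodule.span F {u, w}}).ncard = 2 := by
  rw [quadricPoints_inf_span_pair_eq_pair hind hdet hQ, Set.ncard_pair]
  rw [Ne, Submodule.span_singleton_eq_span_singleton]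
  rintro ⟨z, hz⟩
  rw [Units.smul_def] at hz
  have hcomb : ((z : F) * β - δ) • u + (γ - z * α) • w = 0 := by
    linear_combination (norm := module) hz
  obtain ⟨hδ, hγ⟩ := LinearIndependent.pair_iff.mp hind _ _ hcomb
  exact hdet (by linear_combination (-α) * hδ + (-β) * hγ)

theorem ncard_quadricPoints_inf_span_pair_eq_zero_or_two (h2 : (2 : F) ≠ 0)
    (hind : LinearIndependent F ![u, w]) {A B C : F}
    (hQ : ∀ a b : F, Q (a • u + b • w) = A * a ^ 2 + B * a * b + C * b ^ 2)
    (hD : discrim A B C ≠ 0) :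
    (QuadricPoints Q ∩ {p | p ≤ Submodule.span F {u, w}}).ncard = 0 ∨
      (QuadricPoints Q ∩ {p | p ≤ Submodule.span F {u, w}}).ncard = 2 := by
  by_cases hsq : IsSquare (discrim A B C)
  · obtain ⟨e, he⟩ := hsq
    obtain ⟨α, β, γ, δ, hdet, hfac⟩ :=
      exists_factorization_of_discrim_eq_mul_self h2 he (by rintro rfl; simp_all)
    exact Or.inr <|
      ncard_quadricPoints_inf_span_pair_eq_two hind hdet fun a b => (hQ a b).trans (hfac a b)
  · left
    rw [quadricPoints_inf_span_pair_eq_empty hQ hsq, Set.ncard_empty]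

end BinaryForm

section Spread

variable {F V : Type} [Field F] [AddCommGroup V] [Module F V]

theorem two_mul_ncard_secants_eq_ncard {S P : Set (Submodule F V)} (hS : S.Finite)
    (hP : P.Finite) (hdisj : S.Pairwise fun l₁ l₂ => l₁ ⊓ l₂ = ⊥)
    (hcover : ∀ v : V, ∃ l ∈ S, v ∈ l)
    (hpoints : ∀ p ∈ P, ∃ v : V, v ≠ 0 ∧ p = Submodule.span F {v})
    (hsecant : ∀ l ∈ S, (P ∩ {p | p ≤ l}).ncard = 0 ∨ (P ∩ {p | p ≤ l}).ncard = 2) :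
    2 * {l ∈ S | (P ∩ {p | p ≤ l}).ncard = 2}.ncard = P.ncard := by
  set S₂ := {l ∈ S | (P ∩ {p | p ≤ l}).ncard = 2}
  have hS₂ : S₂.Finite := hS.subset (Set.sep_subset _ _)
  have hunion : P = ⋃ l ∈ S₂, P ∩ {p | p ≤ l} := by
    refine Set.Subset.antisymm (fun p hp => ?_)
      (Set.iUnion₂_subset fun l _ => Set.inter_subset_left)
    obtain ⟨v, hv0, rfl⟩ := hpoints p hp
    obtain ⟨l, hl, hvl⟩ := hcover v
    have hpl : Submodule.span F {v} ∈ P ∩ {p | p ≤ l} :=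
      ⟨hp, (Submodule.span_singleton_le_iff_mem _ _).mpr hvl⟩
    have hpos : (P ∩ {p | p ≤ l}).ncard ≠ 0 :=
      ((Set.ncard_pos (hP.subset Set.inter_subset_left)).mpr ⟨_, hpl⟩).ne'
    exact Set.mem_biUnion ⟨hl, (hsecant l hl).resolve_left hpos⟩ hpl
  have hdisjoint : S₂.PairwiseDisjoint fun l => P ∩ {p | p ≤ l} := by
    intro l₁ hl₁ l₂ hl₂ hne
    refine Set.disjoint_left.mpr fun p hp₁ hp₂ => ?_
    obtain ⟨v, hv0, rfl⟩ := hpoints p hp₁.1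
    have hv : v ∈ l₁ ⊓ l₂ := (Submodule.span_singleton_le_iff_mem _ _).mp (le_inf hp₁.2 hp₂.2)
    rw [hdisj hl₁.1 hl₂.1 hne] at hv
    exact hv0 ((Submodule.mem_bot F).mp hv)
  calc 2 * S₂.ncard = ∑ᶠ l ∈ S₂, (P ∩ {p | p ≤ l}).ncard := by
        rw [finsum_mem_congr rfl fun l hl => hl.2, ← finsum_one, mul_finsum_mem' _ _ hS₂, mul_one]
    _ = (⋃ l ∈ S₂, P ∩ {p | p ≤ l}).ncard :=
        (hS₂.ncard_biUnion (fun l _ => hP.subset Set.inter_subset_left) hdisjoint).symm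
    _ = P.ncard := by rw [← hunion]

end Spread

theorem finrank_span_pair_eq_two {K V : Type*} [DivisionRing K] [AddCommGroup V] [Module K V]
    {u w : V} (h : LinearIndependent K ![u, w]) : finrank K (Submodule.span K {u, w}) = 2 := by
  rw [← Matrix.range_cons_cons_empty u w ![], finrank_span_eq_card h, Fintype.card_fin]

section SpreadLines

variable {F : Type} [Field F]

theorem linearIndependent_pair_of_apply {ι : Type*} {u w : ι → F} {i j : ι}
    (hui : u i = 1) (hwi : w i = 0) (huj : u j = 0) (hwj : w j = 1) :
    LinearIndependent F ![u, w] := by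
  refine LinearIndependent.pair_iff.mpr fun s t hst => ⟨?_, ?_⟩
  · simpa [hui, hwi] using congrFun hst i
  · simpa [huj, hwj] using congrFun hst j

theorem linearIndependent_lineXY (x y : F) :
    LinearIndependent F ![![1, 0, -(x + y), x], ![0, 1, x + 2 * y, y]] :=
  linearIndependent_pair_of_apply (i := 0) (j := 1) rfl rfl rfl rfl

theorem finrank_lineXY (x y : F) : finrank F (lineXY F x y) = 2 :=
  finrank_span_pair_eq_two (linearIndependent_lineXY x y)

theorem finrank_lineInf : finrank F (lineInf F) = 2 :=
  finrank_span_pair_eq_two (linearIndependent_pair_of_apply (i := 2) (j := 3) rfl rfl rfl rfl)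

theorem mem_lineXY_iff {x y : F} {v : Fin 4 → F} :
    v ∈ lineXY F x y ↔ v 2 = -v 0 * (x + y) + v 1 * (x + 2 * y) ∧ v 3 = v 0 * x + v 1 * y := by
  rw [lineXY, Submodule.mem_span_pair]
  constructor
  · rintro ⟨a, b, rfl⟩
    exact ⟨by simp; ring, by simp⟩
  · rintro ⟨h2, h3⟩
    refine ⟨v 0, v 1, funext fun i => ?_⟩
    fin_cases i <;> simp [h2, h3]; ring

theorem mem_lineInf_iff {v : Fin 4 → F} : v ∈ lineInf F ↔ v 0 = 0 ∧ v 1 = 0 := by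
  rw [lineInf, Submodule.mem_span_pair]
  constructor
  · rintro ⟨a, b, rfl⟩
    simp
  · rintro ⟨h0, h1⟩
    refine ⟨v 2, v 3, funext fun i => ?_⟩
    fin_cases i <;> simp [h0, h1]

theorem lineXY_inj {x y x' y' : F} : lineXY F x y = lineXY F x' y' ↔ x = x' ∧ y = y' := by
  refine ⟨fun h => ?_, fun ⟨hx, hy⟩ => hx ▸ hy ▸ rfl⟩
  have hmem : ![1, 0, -(x + y), x] ∈ lineXY F x' y' :=
    h ▸ Submodule.subset_span (by simp)
  obtain ⟨h2, h3⟩ := mem_lineXY_iff.mp hmem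
  simp only [Matrix.cons_val] at h2 h3
  exact ⟨by linear_combination h3, by linear_combination -h2 - h3⟩

theorem lineXY_ne_lineInf (x y : F) : lineXY F x y ≠ lineInf F := by
  intro h
  have hmem : ![1, 0, -(x + y), x] ∈ lineInf F := h ▸ Submodule.subset_span (by simp)
  simp [mem_lineInf_iff] at hmem

theorem spreadS_eq_insert_range :
    spreadS F = insert (lineInf F) (Set.range fun p : F × F => lineXY F p.1 p.2) := by
  ext l
  simp [spreadS, eq_comm]

theorem ncard_spreadS [Fintype F] : (spreadS F).ncard = Fintype.card F ^ 2 + 1 := by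
  have hinj : Function.Injective fun p : F × F => lineXY F p.1 p.2 :=
    fun p p' h => Prod.ext_iff.mpr (lineXY_inj.mp h)
  have hnotMem : lineInf F ∉ Set.range fun p : F × F => lineXY F p.1 p.2 := by
    rintro ⟨p, hp⟩
    exact lineXY_ne_lineInf p.1 p.2 hp
  rw [spreadS_eq_insert_range, Set.ncard_insert_of_notMem hnotMem, ← Set.image_univ,
    Set.ncard_image_of_injective _ hinj, Set.ncard_univ, Nat.card_eq_fintype_card,
    Fintype.card_prod, sq]

theorem forall_mem_spreadS {P : Submodule F (Fin 4 → F) → Prop} :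
    (∀ l ∈ spreadS F, P l) ↔ (∀ x y, P (lineXY F x y)) ∧ P (lineInf F) := by
  rw [spreadS_eq_insert_range, Set.forall_mem_insert, Set.forall_mem_range, Prod.forall, and_comm]

end SpreadLines

section SpreadPartition

variable {F : Type} [Field F]

theorem eq_zero_of_mem_lineXY {x y : F} {v : Fin 4 → F} (hv : v ∈ lineXY F x y)
    (h0 : v 0 = 0) (h1 : v 1 = 0) : v = 0 := by
  obtain ⟨h2, h3⟩ := mem_lineXY_iff.mp hv
  funext i
  fin_cases i <;> simp [h0, h1, h2, h3]

theorem lineXY_inf_lineXY (h3 : (3 : F) = 0) (hF : ¬ IsSquare (-1 : F)) {x y x' y' : F}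
    (hne : (x, y) ≠ (x', y')) : lineXY F x y ⊓ lineXY F x' y' = ⊥ := by
  refine (Submodule.eq_bot_iff _).mpr fun v hv => ?_
  obtain ⟨hv, hv'⟩ := Submodule.mem_inf.mp hv
  obtain ⟨a2, a3⟩ := mem_lineXY_iff.mp hv
  obtain ⟨b2, b3⟩ := mem_lineXY_iff.mp hv'
  have hx : (v 0 ^ 2 + v 1 ^ 2) * (x - x') = 0 := by
    linear_combination v 1 * (b2 - a2) - (2 * v 1 - v 0) * (b3 - a3) + v 0 * v 1 * (x - x') * h3
  have hy : (v 0 ^ 2 + v 1 ^ 2) * (y - y') = 0 := by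
    linear_combination -v 0 * (b2 - a2) + (v 1 - v 0) * (b3 - a3) + v 0 * v 1 * (y - y') * h3
  have hnorm : v 0 ^ 2 + v 1 ^ 2 = 0 := by
    by_contra hn
    refine hne (Prod.ext ?_ ?_)
    · exact sub_eq_zero.mp ((mul_eq_zero.mp hx).resolve_left hn)
    · exact sub_eq_zero.mp ((mul_eq_zero.mp hy).resolve_left hn)
  obtain ⟨h0, h1⟩ := (sq_add_sq_eq_zero_iff_of_not_isSquare_neg_one hF).mp hnorm
  exact eq_zero_of_mem_lineXY hv h0 h1

theorem lineXY_inf_lineInf (x y : F) : lineXY F x y ⊓ lineInf F = ⊥ := by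
  refine (Submodule.eq_bot_iff _).mpr fun v hv => ?_
  obtain ⟨hv, hv'⟩ := Submodule.mem_inf.mp hv
  obtain ⟨h0, h1⟩ := mem_lineInf_iff.mp hv'
  exact eq_zero_of_mem_lineXY hv h0 h1

theorem exists_mem_lineXY (h3 : (3 : F) = 0) (hF : ¬ IsSquare (-1 : F)) {v : Fin 4 → F}
    (hv : ¬ (v 0 = 0 ∧ v 1 = 0)) : ∃ x y, v ∈ lineXY F x y := by
  set Δ := v 0 ^ 2 + v 1 ^ 2 - 3 * (v 0 * v 1)
  have hΔ : Δ ≠ 0 := by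
    rw [show Δ = v 0 ^ 2 + v 1 ^ 2 by linear_combination (-(v 0 * v 1)) * h3]
    exact mt (sq_add_sq_eq_zero_iff_of_not_isSquare_neg_one hF).mp hv
  refine ⟨(v 1 * v 2 - (2 * v 1 - v 0) * v 3) / Δ, ((v 1 - v 0) * v 3 - v 0 * v 2) / Δ,
    mem_lineXY_iff.mpr ⟨?_, ?_⟩⟩ <;>
  · field_simp
    ring

theorem spreadS_pairwise_inf_eq_bot (h3 : (3 : F) = 0) (hF : ¬ IsSquare (-1 : F)) :
    (spreadS F).Pairwise fun l₁ l₂ => l₁ ⊓ l₂ = ⊥ := by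
  rintro _ (⟨x, y, rfl⟩ | rfl) _ (⟨x', y', rfl⟩ | rfl) hne
  · exact lineXY_inf_lineXY h3 hF fun h => hne (by simp_all)
  · exact lineXY_inf_lineInf x y
  · rw [inf_comm]
    exact lineXY_inf_lineInf x' y'
  · exact absurd rfl hne

theorem exists_mem_spreadS (h3 : (3 : F) = 0) (hF : ¬ IsSquare (-1 : F)) (v : Fin 4 → F) :
    ∃ l ∈ spreadS F, v ∈ l := by
  by_cases hv : v 0 = 0 ∧ v 1 = 0
  · exact ⟨lineInf F, Or.inr rfl, mem_lineInf_iff.mpr hv⟩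
  · obtain ⟨x, y, hxy⟩ := exists_mem_lineXY h3 hF hv
    exact ⟨lineXY F x y, Or.inl ⟨x, y, rfl⟩, hxy⟩

end SpreadPartition

section EllipticQuadric

variable {F : Type} [Field F]

theorem ellQuadric_lineXY (x y a b : F) :
    ellQuadric F (a • ![1, 0, -(x + y), x] + b • ![0, 1, x + 2 * y, y]) =
      ((x + y) ^ 2 + x ^ 2) * a ^ 2 + (1 - 2 * ((x + y) * (x + 2 * y)) + 2 * (x * y)) * a * b +
        ((x + 2 * y) ^ 2 + y ^ 2) * b ^ 2 := by
  simp [ellQuadric]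
  ring

theorem discrim_ellQuadric_lineXY_ne_zero (h3 : (3 : F) = 0) (hF : ¬ IsSquare (-1 : F))
    (x y : F) :
    discrim ((x + y) ^ 2 + x ^ 2) (1 - 2 * ((x + y) * (x + 2 * y)) + 2 * (x * y))
      ((x + 2 * y) ^ 2 + y ^ 2) ≠ 0 := by
  set A := (x + y) ^ 2 + x ^ 2
  set B := 1 - 2 * ((x + y) * (x + 2 * y)) + 2 * (x * y)
  have hD : discrim A B ((x + 2 * y) ^ 2 + y ^ 2) = B ^ 2 + A ^ 2 := by
    rw [discrim]
    -- `A + 4 C = 3 (2 x² + 6 x y + 7 y²)`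
    linear_combination (-A * (2 * x ^ 2 + 6 * x * y + 7 * y ^ 2)) * h3
  rw [hD]
  intro h
  obtain ⟨hB, hA⟩ := (sq_add_sq_eq_zero_iff_of_not_isSquare_neg_one hF).mp h
  obtain ⟨hxy, hx⟩ := (sq_add_sq_eq_zero_iff_of_not_isSquare_neg_one hF).mp hA
  have hy : y = 0 := by linear_combination hxy - hx
  simp [B, hx, hy] at hB

theorem ncard_quadricPoints_inf_lineXY (h3 : (3 : F) = 0) (hF : ¬ IsSquare (-1 : F))
    (x y : F) :
    (QuadricPoints (ellQuadric F) ∩ {p | p ≤ lineXY F x y}).ncard = 0 ∨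
      (QuadricPoints (ellQuadric F) ∩ {p | p ≤ lineXY F x y}).ncard = 2 :=
  ncard_quadricPoints_inf_span_pair_eq_zero_or_two
    (fun h2 => one_ne_zero (by linear_combination h3 - h2 : (1 : F) = 0))
    (linearIndependent_lineXY x y) (ellQuadric_lineXY x y)
    (discrim_ellQuadric_lineXY_ne_zero h3 hF x y)

theorem quadricPoints_inf_lineInf (hF : ¬ IsSquare (-1 : F)) :
    QuadricPoints (ellQuadric F) ∩ {p | p ≤ lineInf F} = ∅ := by
  refine Set.eq_empty_iff_forall_notMem.mpr ?_
  rintro p ⟨⟨v, hv0, hQv, rfl⟩, hle⟩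
  obtain ⟨h0, h1⟩ := mem_lineInf_iff.mp ((Submodule.span_singleton_le_iff_mem _ _).mp hle)
  have hnorm : v 2 ^ 2 + v 3 ^ 2 = 0 := by simpa [ellQuadric, h0] using hQv
  obtain ⟨h2, h3⟩ := (sq_add_sq_eq_zero_iff_of_not_isSquare_neg_one hF).mp hnorm
  exact hv0 (funext fun i => by fin_cases i <;> assumption)

theorem quadricPoints_ellQuadric (hF : ¬ IsSquare (-1 : F)) :
    QuadricPoints (ellQuadric F) = insert (Submodule.span F {![0, 1, 0, 0]})
      (Set.range fun p : F × F => Submodule.span F {![1, -(p.1 ^ 2 + p.2 ^ 2), p.1, p.2]}) := by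
  ext P
  constructor
  · rintro ⟨v, hv0, hQv, rfl⟩
    have hQv : v 0 * v 1 + v 2 ^ 2 + v 3 ^ 2 = 0 := hQv
    by_cases h0 : v 0 = 0
    · obtain ⟨h2, h3⟩ := (sq_add_sq_eq_zero_iff_of_not_isSquare_neg_one hF (a := v 2) (b := v 3)).mp
        (by linear_combination hQv - v 1 * h0)
      refine Or.inl (span_singleton_eq_of_smul_eq_smul one_ne_zero hv0 (d := v 1) ?_)
      funext i
      fin_cases i <;> simp [h0, h2, h3]
    · refine Or.inr ⟨(v 2 / v 0, v 3 / v 0),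
        (span_singleton_eq_of_smul_eq_smul one_ne_zero hv0 (d := v 0) ?_).symm⟩
      funext i
      fin_cases i <;> simp <;> field_simp
      linear_combination hQv
  · rintro (rfl | ⟨p, rfl⟩)
    · exact ⟨_, by simp, by simp [ellQuadric], rfl⟩
    · exact ⟨_, by simp, by simp [ellQuadric], rfl⟩

theorem ncard_quadricPoints_ellQuadric [Fintype F] (hF : ¬ IsSquare (-1 : F)) :
    (QuadricPoints (ellQuadric F)).ncard = Fintype.card F ^ 2 + 1 := by
  have hinj : Function.Injective fun p : F × F =>
      Submodule.span F {![1, -(p.1 ^ 2 + p.2 ^ 2), p.1, p.2]} := by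
    intro p p' h
    obtain ⟨z, hz⟩ := Submodule.span_singleton_eq_span_singleton.mp h
    have hz1 : (z : F) = 1 := by simpa [Units.smul_def] using congrFun hz 0
    have hz2 := congrFun hz 2
    have hz3 := congrFun hz 3
    simp only [Units.smul_def, hz1, one_smul] at hz2 hz3
    exact Prod.ext (by simpa using hz2) (by simpa using hz3)
  have hnotMem : Submodule.span F {![0, 1, 0, 0]} ∉ Set.range fun p : F × F =>
      Submodule.span F {![1, -(p.1 ^ 2 + p.2 ^ 2), p.1, p.2]} := by
    rintro ⟨p, hp⟩
    obtain ⟨z, hz⟩ := Submodule.span_singleton_eq_span_singleton.mp hp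
    simpa [Units.smul_def] using congrFun hz 0
  rw [quadricPoints_ellQuadric hF, Set.ncard_insert_of_notMem hnotMem, ← Set.image_univ,
    Set.ncard_image_of_injective _ hinj, Set.ncard_univ, Nat.card_eq_fintype_card,
    Fintype.card_prod, sq]

end EllipticQuadric

/-- For `q = 3^h`, `h` odd, the set `𝒮 = { ℓ_{x,y} } ∪ { ℓ_∞ }` is a line spread of
`PG(3,q)` without tangent lines to the elliptic quadric `X₀X₁ + X₂² + X₃² = 0`; hence
exactly `(q²+1)/2` of its members are 2-secants to this quadric. -/
theorem spreadS_is_spread_without_tangents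
    {q h : ℕ} (hodd : Odd h) (hq : q = 3 ^ h)
    {F : Type} [Field F] [Fintype F] (hcard : Fintype.card F = q) :
    (spreadS F).ncard = q ^ 2 + 1 ∧
    (∀ l ∈ spreadS F, Module.finrank F l = 2) ∧
    (∀ l₁ ∈ spreadS F, ∀ l₂ ∈ spreadS F, l₁ ≠ l₂ → l₁ ⊓ l₂ = ⊥) ∧
    (∀ v : Fin 4 → F, ∃ l ∈ spreadS F, v ∈ l) ∧
    (∀ l ∈ spreadS F, (QuadricPoints (ellQuadric F) ∩ {p | p ≤ l}).ncard ≠ 1) ∧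
    {l ∈ spreadS F | (QuadricPoints (ellQuadric F) ∩ {p | p ≤ l}).ncard = 2}.ncard
      = (q ^ 2 + 1) / 2 := by
  subst hq
  have h3 := three_eq_zero_of_card_eq_three_pow hodd.pos.ne' hcard
  have hF := not_isSquare_neg_one_of_card_eq_three_pow hodd hcard
  have hsecant : ∀ l ∈ spreadS F, (QuadricPoints (ellQuadric F) ∩ {p | p ≤ l}).ncard = 0 ∨
      (QuadricPoints (ellQuadric F) ∩ {p | p ≤ l}).ncard = 2 :=
    forall_mem_spreadS.mpr ⟨ncard_quadricPoints_inf_lineXY h3 hF,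
      Or.inl (by rw [quadricPoints_inf_lineInf hF, Set.ncard_empty])⟩
  have hcount := two_mul_ncard_secants_eq_ncard (P := QuadricPoints (ellQuadric F))
    (Set.toFinite _) (Set.toFinite _) (spreadS_pairwise_inf_eq_bot h3 hF)
    (exists_mem_spreadS h3 hF) (fun _ ⟨v, hv0, _, hp⟩ => ⟨v, hv0, hp⟩) hsecant
  rw [ncard_quadricPoints_ellQuadric hF, hcard] at hcount
  refine ⟨by rw [ncard_spreadS, hcard], forall_mem_spreadS.mpr ⟨finrank_lineXY, finrank_lineInf⟩,
    spreadS_pairwise_inf_eq_bot h3 hF, exists_mem_spreadS h3 hF,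
    fun l hl => by rcases hsecant l hl with h | h <;> omega, ?_⟩
  rw [← hcount, Nat.mul_div_cancel_left _ two_pos]
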